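/- With P = ℂ[x₁,x₂,x₃], f₁ = 2x₁+x₂x₃, f₂ = 2x₂+x₁x₃, f₃ = x₁x₂, and the Koszul maps d₁ : P³ → P, d₁(a₁,a₂,a₃) = a₁f₁ + a₂f₂ + a₃f₃, and d₂ : P³ → P³, d₂(b₁₂,b₁₃,b₂₃) = (−b₁₂f₂ − b₁₃f₃, b₁₂f₁ − b₂₃f₃, b₁₃f₁ + b₂₃f₂), set v := (2x₂, −x₂x₃, x₃²−4) ∈ P³. Then: (i) d₁(v) = 0; (ii) every element of ker d₁ can be written as p(x₃)·v + d₂(u) for some polynomial p ∈ ℂ[x₃] ⊆ P and some u ∈ P³; and (iii) if p(x₃)·v ∈ im d₂ for some p ∈ ℂ[x₃], then p = 0. (Thus the degree −1 Koszul cohomology of (∂W) for W = x₁²+x₂²+x₁x₂x₃ is the free ℂ[x₃]-module generated by 2x₂θ₁ − x₂x₃θ₂ + (x₃²−4)θ₃.) -/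

import Mathlib

noncomputable section
open MvPolynomial

/-- `P = ℂ[x₁,x₂,x₃]` with `x₁ = X 0`, `x₂ = X 1`, `x₃ = X 2`. -/
abbrev P : Type := MvPolynomial (Fin 3) ℂ

/-- `f₁ = 2x₁+x₂x₃ = ∂W/∂x₁` for `W = x₁²+x₂²+x₁x₂x₃`. -/
def f1 : P := 2 * X 0 + X 1 * X 2
/-- `f₂ = 2x₂+x₁x₃`. -/
def f2 : P := 2 * X 1 + X 0 * X 2
/-- `f₃ = x₁x₂`. -/
def f3 : P := X 0 * X 1

/-- Koszul differential `d₁ : P³ → P`. -/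
def d1 : P × P × P → P := fun a => a.1 * f1 + a.2.1 * f2 + a.2.2 * f3

/-- Koszul differential `d₂ : P³ → P³`, middle term indexed by `(1,2), (1,3), (2,3)`. -/
def d2 : P × P × P → P × P × P := fun b =>
  (-(b.1 * f2) - b.2.1 * f3, b.1 * f1 - b.2.2 * f3, b.2.1 * f1 + b.2.2 * f2)

/-- `v = (2x₂, −x₂x₃, x₃²−4)`. -/
def v : P × P × P := (2 * X 1, -(X 1 * X 2), X 2 ^ 2 - 4)

/-
Substituting `x₁ = -x₂x₃/2` kills `f₁` and turns `f₂, f₃` into `x₂(4 - x₃²)/2` and `-x₂²x₃/2`.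
Applied to a cycle `(a₁, a₂, a₃)`, it shows that the reduction of `a₃` modulo `f₁` vanishes at
`x₃ = ±2`, so `a₃ ≡ q·(x₃² - 4)`, a multiple of the last entry of `v`. Then `w - q·v` is, up to
a boundary, a syzygy of the regular sequence `f₁, f₂`, hence a boundary. Since `x₁v` and `x₂v`
are boundaries, `q` may be replaced by `q(0, 0, x₃)`. Conversely, setting `x₁ = x₂ = 0` in the
last entry of `d₂ u` gives `0`, so no nonzero `p(x₃)·v` is a boundary.
-/
namespace MvPolynomial

variable {R σ : Type*} [CommRing R] [DecidableEq σ]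

theorem X_sub_dvd_sub_aeval_update (i : σ) (q g : MvPolynomial σ R) :
    X i - q ∣ g - aeval (Function.update X i q) g := by
  induction g using MvPolynomial.induction_on with
  | C c => simp
  | add g h hg hh => simpa only [map_add, add_sub_add_comm] using dvd_add hg hh
  | mul_X g j hg =>
    set φ : MvPolynomial σ R →ₐ[R] MvPolynomial σ R := aeval (Function.update X i q)
    have hXj : X i - q ∣ X j - φ (X j) := by
      rcases eq_or_ne j i with rfl | hj <;> simp [φ, *]
    rw [map_mul, show g * X j - φ g * φ (X j) = (g - φ g) * X j + φ g * (X j - φ (X j)) by ring]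
    exact dvd_add (hg.mul_right _) (hXj.mul_left _)

theorem X_sub_dvd_of_aeval_update_eq_zero {i : σ} {q g : MvPolynomial σ R}
    (hg : aeval (Function.update X i q) g = 0) : X i - q ∣ g := by
  have h := X_sub_dvd_sub_aeval_update i q g
  rwa [hg, sub_zero] at h

theorem X_sub_C_mul_X_sub_C_dvd [IsDomain R] {i : σ} {a b : R} (hab : a ≠ b)
    {g : MvPolynomial σ R} (ha : aeval (Function.update X i (C a)) g = 0)
    (hb : aeval (Function.update X i (C b)) g = 0) : (X i - C a) * (X i - C b) ∣ g := by
  obtain ⟨g', rfl⟩ := X_sub_dvd_of_aeval_update_eq_zero ha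
  have hba : (C b - C a : MvPolynomial σ R) ≠ 0 := sub_ne_zero.mpr ((C_injective σ R).ne hab.symm)
  have hb' : aeval (Function.update X i (C b)) g' = 0 := by
    simpa [algebraMap_eq, hba] using hb
  exact mul_dvd_mul_left _ (X_sub_dvd_of_aeval_update_eq_zero hb')

end MvPolynomial

lemma two_mul_C_inv_two : (2 : P) * C 2⁻¹ = 1 := by
  rw [← map_ofNat C 2, ← C_mul, mul_inv_cancel₀ two_ne_zero, C_1]

abbrev elimX0 : P →ₐ[ℂ] P := aeval (Function.update X 0 (-(C 2⁻¹ * (X 1 * X 2))))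

abbrev elimX1 : P →ₐ[ℂ] P := aeval (Function.update X 1 (-(C 2⁻¹ * (X 0 * X 2))))

lemma f1_dvd_sub_elimX0 (g : P) : f1 ∣ g - elimX0 g := by
  have hf1 : f1 = 2 * (X 0 - -(C 2⁻¹ * (X 1 * X 2))) := by
    rw [f1]; linear_combination (-(X 1 * X 2) : P) * two_mul_C_inv_two
  rw [hf1, (IsUnit.of_mul_eq_one _ two_mul_C_inv_two).mul_left_dvd]
  exact X_sub_dvd_sub_aeval_update _ _ g

lemma f2_dvd_sub_elimX1 (g : P) : f2 ∣ g - elimX1 g := by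
  have hf2 : f2 = 2 * (X 1 - -(C 2⁻¹ * (X 0 * X 2))) := by
    rw [f2]; linear_combination (-(X 0 * X 2) : P) * two_mul_C_inv_two
  rw [hf2, (IsUnit.of_mul_eq_one _ two_mul_C_inv_two).mul_left_dvd]
  exact X_sub_dvd_sub_aeval_update _ _ g

lemma elimX0_f1 : elimX0 f1 = 0 := by
  simp only [f1, map_add, map_mul, map_ofNat, aeval_X, Function.update_apply, Fin.reduceEq,
    ↓reduceIte]
  linear_combination (-(X 1 * X 2) : P) * two_mul_C_inv_two

lemma two_mul_elimX0_f2 : 2 * elimX0 f2 = X 1 * (4 - X 2 ^ 2) := by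
  simp only [f2, map_add, map_mul, map_ofNat, aeval_X, Function.update_apply, Fin.reduceEq,
    ↓reduceIte]
  linear_combination (-(X 1 * X 2 ^ 2) : P) * two_mul_C_inv_two

lemma two_mul_elimX0_f3 : 2 * elimX0 f3 = -(X 1 * (X 1 * X 2)) := by
  simp only [f3, map_mul, aeval_X, Function.update_apply, Fin.reduceEq, ↓reduceIte]
  linear_combination (-(X 1 ^ 2 * X 2) : P) * two_mul_C_inv_two

lemma two_mul_elimX1_f1 : 2 * elimX1 f1 = X 0 * (4 - X 2 ^ 2) := by
  simp only [f1, map_add, map_mul, map_ofNat, aeval_X, Function.update_apply, Fin.reduceEq,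
    ↓reduceIte]
  linear_combination (-(X 0 * X 2 ^ 2) : P) * two_mul_C_inv_two

lemma elimX1_f2 : elimX1 f2 = 0 := by
  simp only [f2, map_add, map_mul, map_ofNat, aeval_X, Function.update_apply, Fin.reduceEq,
    ↓reduceIte]
  linear_combination (-(X 0 * X 2) : P) * two_mul_C_inv_two

lemma four_sub_X2_sq_ne_zero : (4 - X 2 ^ 2 : P) ≠ 0 := fun h => by
  simpa [map_ofNat] using congrArg (eval 0) h

lemma f2_ne_zero : f2 ≠ 0 := fun h => by
  simpa [f2] using congrArg (eval ![0, 1, 0]) h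

lemma exists_of_mul_f1_add_mul_f2_eq_zero {c₁ c₂ : P} (h : c₁ * f1 + c₂ * f2 = 0) :
    ∃ m, c₁ = -(m * f2) ∧ c₂ = m * f1 := by
  have hc₁ : elimX1 c₁ = 0 := by
    have h' := congrArg elimX1 h
    rw [map_add, map_mul, map_mul, elimX1_f2, mul_zero, add_zero, map_zero] at h'
    have h'' : X 0 * (4 - X 2 ^ 2) * elimX1 c₁ = 0 := by
      linear_combination 2 * h' - elimX1 c₁ * two_mul_elimX1_f1
    simpa [X_ne_zero, four_sub_X2_sq_ne_zero] using h''
  obtain ⟨m, rfl⟩ : f2 ∣ c₁ := by simpa only [hc₁, sub_zero] using f2_dvd_sub_elimX1 c₁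
  refine ⟨-m, by ring, ?_⟩
  have h' : f2 * (c₂ + m * f1) = 0 := by linear_combination h
  linear_combination (mul_eq_zero.mp h').resolve_left f2_ne_zero

lemma sq_sub_four_dvd_elimX0 {a₁ a₂ a₃ : P} (h : a₁ * f1 + a₂ * f2 + a₃ * f3 = 0) :
    X 2 ^ 2 - 4 ∣ elimX0 a₃ := by
  have hrel : elimX0 a₂ * (4 - X 2 ^ 2) = elimX0 a₃ * (X 1 * X 2) := by
    have h' := congrArg elimX0 h
    simp only [map_add, map_mul, elimX0_f1, mul_zero, zero_add, map_zero] at h'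
    have h'' : X 1 * (elimX0 a₂ * (4 - X 2 ^ 2) - elimX0 a₃ * (X 1 * X 2)) = 0 := by
      linear_combination 2 * h' - elimX0 a₂ * two_mul_elimX0_f2 - elimX0 a₃ * two_mul_elimX0_f3
    exact sub_eq_zero.mp ((mul_eq_zero.mp h'').resolve_left (X_ne_zero 1))
  have hroot (c : ℂ) (hc : c ^ 2 = 4) : aeval (Function.update X 2 (C c)) (elimX0 a₃) = 0 := by
    have h' := congrArg (aeval (Function.update X 2 (C c))) hrel
    have hc0 : c ≠ 0 := by rintro rfl; norm_num at hc
    simp only [map_mul, map_sub, map_ofNat, map_pow, aeval_X, Function.update_apply,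
      Fin.reduceEq, ↓reduceIte, ← map_pow C, hc, sub_self, mul_zero] at h'
    exact (mul_eq_zero.mp h'.symm).resolve_right (mul_ne_zero (X_ne_zero 1) (by simpa using hc0))
  have hfac : (X 2 ^ 2 - 4 : P) = (X 2 - C 2) * (X 2 - C (-2)) := by
    simp only [map_neg, map_ofNat]; ring
  rw [hfac]
  exact X_sub_C_mul_X_sub_C_dvd (by norm_num) (hroot 2 (by norm_num)) (hroot (-2) (by norm_num))

lemma d1_v : d1 v = 0 := by
  simp only [d1, v, f1, f2, f3]; ring

lemma d2_add (u u' : P × P × P) : d2 (u + u') = d2 u + d2 u' := by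
  simp only [d2, Prod.fst_add, Prod.snd_add, Prod.mk_add_mk, Prod.mk.injEq]
  refine ⟨?_, ?_, ?_⟩ <;> ring

lemma d2_smul (q : P) (u : P × P × P) : d2 (q • u) = q • d2 u := by
  simp only [d2, Prod.smul_fst, Prod.smul_snd, Prod.smul_mk, smul_eq_mul, Prod.mk.injEq]
  refine ⟨?_, ?_, ?_⟩ <;> ring

lemma X0_smul_v : (X 0 : P) • v = d2 (0, -2, X 2) := by
  simp only [v, d2, f1, f2, f3, Prod.smul_mk, smul_eq_mul, Prod.mk.injEq]
  refine ⟨?_, ?_, ?_⟩ <;> ring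

lemma X1_smul_v : (X 1 : P) • v = d2 (-X 1, X 2, -2) := by
  simp only [v, d2, f1, f2, f3, Prod.smul_mk, smul_eq_mul, Prod.mk.injEq]
  refine ⟨?_, ?_, ?_⟩ <;> ring

lemma exists_smul_v_add_d2_of_d1_eq_zero {w : P × P × P} (hw : d1 w = 0) :
    ∃ (q : P) (u : P × P × P), w = q • v + d2 u := by
  obtain ⟨a₁, a₂, a₃⟩ := w
  simp only [d1] at hw
  obtain ⟨k, hk⟩ := f1_dvd_sub_elimX0 a₃
  obtain ⟨q, hq⟩ := sq_sub_four_dvd_elimX0 hw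
  obtain ⟨m, hm₁, hm₂⟩ :
      ∃ m, a₁ + k * f3 - 2 * X 1 * q = -(m * f2) ∧ a₂ + X 1 * X 2 * q = m * f1 := by
    have hv := d1_v
    simp only [d1, v] at hv
    exact exists_of_mul_f1_add_mul_f2_eq_zero
      (by linear_combination hw - f3 * hk - f3 * hq - q * hv)
  refine ⟨q, (m, k, 0), ?_⟩
  simp only [v, d2, Prod.smul_mk, smul_eq_mul, Prod.mk_add_mk, Prod.mk.injEq]
  refine ⟨?_, ?_, ?_⟩
  · linear_combination hm₁
  · linear_combination hm₂
  · linear_combination hk + hq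

lemma exists_aeval_smul_v_add_d2 (q : P) :
    ∃ (p : Polynomial ℂ) (u : P × P × P), q • v = Polynomial.aeval (X 2 : P) p • v + d2 u := by
  induction q using MvPolynomial.induction_on with
  | C c => exact ⟨Polynomial.C c, 0, by simp [d2]⟩
  | add q q' hq hq' =>
    obtain ⟨p, u, hpu⟩ := hq
    obtain ⟨p', u', hpu'⟩ := hq'
    refine ⟨p + p', u + u', ?_⟩
    rw [add_smul, hpu, hpu', map_add, add_smul, d2_add]
    abel
  | mul_X q j hq =>
    obtain ⟨p, u, hpu⟩ := hq
    have hX : (q * X j) • v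
        = (X j : P) • (Polynomial.aeval (X 2 : P) p • v) + d2 ((X j : P) • u) := by
      rw [mul_comm, mul_smul, hpu, smul_add, d2_smul]
    obtain rfl | rfl | rfl : j = 0 ∨ j = 1 ∨ j = 2 := by fin_cases j <;> simp
    · refine ⟨0, Polynomial.aeval (X 2 : P) p • ((0, -2, X 2) : P × P × P) + (X 0 : P) • u, ?_⟩
      rw [hX, smul_comm, X0_smul_v, map_zero, zero_smul, zero_add, d2_add,
        d2_smul (Polynomial.aeval _ p)]
    · refine ⟨0, Polynomial.aeval (X 2 : P) p • ((-X 1, X 2, -2) : P × P × P) + (X 1 : P) • u, ?_⟩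
      rw [hX, smul_comm, X1_smul_v, map_zero, zero_smul, zero_add, d2_add,
        d2_smul (Polynomial.aeval _ p)]
    · refine ⟨Polynomial.X * p, (X 2 : P) • u, ?_⟩
      rw [hX, smul_smul, map_mul, Polynomial.aeval_X]

lemma eq_zero_of_aeval_smul_v_eq_d2 {p : Polynomial ℂ} {u : P × P × P}
    (h : Polynomial.aeval (X 2 : P) p • v = d2 u) : p = 0 := by
  have hp : aeval ![0, 0, Polynomial.X] (Polynomial.aeval (X 2 : P) p) = p := by
    rw [← Polynomial.aeval_algHom_apply, aeval_X]; simp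
  have h₃ := congrArg
    (fun w : P × P × P ↦ aeval (![0, 0, Polynomial.X] : Fin 3 → Polynomial ℂ) w.2.2) h
  have hquad : (Polynomial.X ^ 2 - 4 : Polynomial ℂ) ≠ 0 := fun h ↦ by
    simpa using congrArg (Polynomial.eval 0) h
  simp only [v, d2, Prod.smul_mk, smul_eq_mul, map_mul, map_add, hp] at h₃
  simpa [f1, f2, hquad] using h₃

theorem stmt16 :
    d1 v = 0 ∧
    (∀ w : P × P × P, d1 w = 0 →
      ∃ (p : Polynomial ℂ) (u : P × P × P),
        w = (Polynomial.aeval (X 2 : P) p) • v + d2 u) ∧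
    (∀ p : Polynomial ℂ,
      (∃ u : P × P × P, (Polynomial.aeval (X 2 : P) p) • v = d2 u) → p = 0) := by
  refine ⟨d1_v, fun w hw => ?_, fun p ⟨u, hu⟩ => eq_zero_of_aeval_smul_v_eq_d2 hu⟩
  obtain ⟨q, u, rfl⟩ := exists_smul_v_add_d2_of_d1_eq_zero hw
  obtain ⟨p, u', hq⟩ := exists_aeval_smul_v_add_d2 q
  exact ⟨p, u' + u, by rw [hq, d2_add, add_assoc]⟩
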